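/- Consider the scenario-tree recursion. Then the supremum of the one-shot objective F over all one-shot assignments 𝐱 equals the root value W_1^{root} (the level-1 node value, which is max_{x_1} [c_1(x_1) + (1/m_1) Σ_{j_1=1}^{m_1} W_2^{(j_1)}(x_1)]), and this supremum is attained by some one-shot assignment. -/

import Mathlib

/-- A level-`t` node (0-indexed) of the scenario tree with branching numbers `m`:
a multi-index selecting a branch at each earlier level. The root is the unique
level-`0` node. -/
abbrev Node (m : ℕ → ℕ) (t : ℕ) : Type := (i : Fin t) → Fin (m i)

/-- The root node. -/
def Node.root (m : ℕ → ℕ) : Node m 0 := fun i => i.elim0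

/-- Extend a level-`t` node by choosing branch `jt` at level `t`. -/
def Node.snoc {m : ℕ → ℕ} {t : ℕ} (j : Node m t) (jt : Fin (m t)) : Node m (t + 1) :=
  Fin.snoc (α := fun i : Fin (t + 1) => Fin (m i)) j jt

/-- Truncate a level-`t` node to level `s ≤ t`. -/
def Node.take {m : ℕ → ℕ} {t : ℕ} (j : Node m t) (s : ℕ) (h : s ≤ t) : Node m s :=
  fun i => j (Fin.castLE h i)

/-- The along-path decisions of a one-shot assignment `A` at the level-`t` node `j`. -/
def pathX {X : Type*} {m : ℕ → ℕ} (A : (t : ℕ) → Node m t → X) (t : ℕ) (j : Node m t) :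
    Fin (t + 1) → X :=
  fun i => A i (j.take i (Nat.lt_succ_iff.mp i.isLt))

/-- The one-shot objective of the assignment `A`: the weighted sum over all nodes of the
stage rewards evaluated at the along-path decisions. -/
noncomputable def oneShotF {X : Type*} (k : ℕ) (m : ℕ → ℕ)
    (c : (t : ℕ) → Node m t → (Fin (t + 1) → X) → ℝ)
    (A : (t : ℕ) → Node m t → X) : ℝ :=
  ∑ t ∈ Finset.range k, (∏ i ∈ Finset.range t, (1 / (m i : ℝ))) *
    ∑ j : Node m t, c t j (pathX A t j)

/-!
Induction on the depth, splitting the tree at the root. The objective of an assignment is the root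
reward plus `1 / m 0` times the objectives of the `m 0` subtrees, and each subtree is a scenario
tree of one level less whose assignment can be chosen independently of the others. Hence the
supremum is the maximum over the root decision of the root reward plus the average of the subtree
suprema, which is the backward recursion defining `W`.
-/

theorem isGreatest_range_add_sum {α β ι : Type*} [Fintype ι] {w : ℝ} (hw : 0 ≤ w) {f : α → ℝ}
    {g : α → ι → β → ℝ} {v : α → ι → ℝ} (hg : ∀ a i, IsGreatest (Set.range (g a i)) (v a i))
    {V : ℝ} (hV : IsGreatest (Set.range fun a => f a + w * ∑ i, v a i) V) :
    IsGreatest (Set.range fun p : α × (ι → β) => f p.1 + w * ∑ i, g p.1 i (p.2 i)) V := by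
  constructor
  · obtain ⟨a, ha⟩ := hV.1
    choose b hb using fun i => (hg a i).1
    exact ⟨(a, b), by simpa [hb] using ha⟩
  · rintro _ ⟨⟨a, b⟩, rfl⟩
    calc f a + w * ∑ i, g a i (b i) ≤ f a + w * ∑ i, v a i := by
          gcongr with i
          exact (hg a i).2 ⟨b i, rfl⟩
      _ ≤ V := hV.2 ⟨a, rfl⟩

namespace Node

variable {m : ℕ → ℕ} {t : ℕ}

def cons (jt : Fin (m 0)) (j : Node (fun i => m (i + 1)) t) : Node m (t + 1) :=
  Fin.cons (α := fun i : Fin (t + 1) => Fin (m i)) jt j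

theorem cons_snoc (jt : Fin (m 0)) (j : Node (fun i => m (i + 1)) t) (jt' : Fin (m (t + 1))) :
    cons jt (j.snoc jt') = (cons jt j).snoc jt' := by
  funext i
  induction i using Fin.cases with
  | zero => rfl
  | succ i =>
    change j.snoc jt' i = _
    induction i using Fin.lastCases with
    | last =>
      rw [snoc, Fin.snoc_last]
      exact (Fin.snoc_last (α := fun i : Fin (t + 2) => Fin (m i)) _ _).symm
    | cast i =>
      change _ = (cons jt j).snoc jt' i.succ.castSucc
      rw [snoc, snoc, Fin.snoc_castSucc, Fin.snoc_castSucc]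
      rfl

theorem take_cons (jt : Fin (m 0)) (j : Node (fun i => m (i + 1)) t) (s : ℕ) (h : s ≤ t) :
    (cons jt j).take (s + 1) (by omega) = cons jt (j.take s h) := by
  funext i
  induction i using Fin.cases with
  | zero => rfl
  | succ i => rfl

theorem cons_root (jt : Fin (m 0)) (j : Node (fun i => m (i + 1)) 0) :
    cons jt j = (root m).snoc jt := by
  funext i
  fin_cases i
  rfl

theorem sum_succ {M : Type*} [AddCommMonoid M] (f : Node m (t + 1) → M) :
    ∑ j, f j = ∑ jt, ∑ j : Node (fun i => m (i + 1)) t, f (cons jt j) := by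
  rw [← (Fin.consEquiv fun i : Fin (t + 1) => Fin (m i)).sum_comp, Fintype.sum_prod_type]
  rfl

end Node

section

variable {X : Type*} {m : ℕ → ℕ}

abbrev Assignment (m : ℕ → ℕ) (X : Type*) : Type _ := (t : ℕ) → Node m t → X

namespace Assignment

def branch (A : Assignment m X) (jt : Fin (m 0)) : Assignment (fun i => m (i + 1)) X :=
  fun t j => A (t + 1) (Node.cons jt j)

def graft (x : X) (B : Fin (m 0) → Assignment (fun i => m (i + 1)) X) : Assignment m X
  | 0, _ => x
  | t + 1, j => B (j 0) t (Fin.tail j)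

theorem branch_graft (x : X) (B : Fin (m 0) → Assignment (fun i => m (i + 1)) X)
    (jt : Fin (m 0)) : (graft x B).branch jt = B jt :=
  rfl

theorem graft_surjective :
    Function.Surjective fun p : X × (Fin (m 0) → Assignment (fun i => m (i + 1)) X) =>
      graft p.1 p.2 := by
  intro A
  refine ⟨(A 0 (Node.root m), A.branch), funext fun t => funext fun j => ?_⟩
  cases t with
  | zero => exact congrArg (A 0) (Subsingleton.elim _ _)
  | succ t => exact congrArg (A (t + 1)) (Fin.cons_self_tail j)

end Assignment

theorem pathX_cons (A : Assignment m X) {t : ℕ} (jt : Fin (m 0))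
    (j : Node (fun i => m (i + 1)) t) :
    pathX A (t + 1) (Node.cons jt j) = Fin.cons (A 0 (Node.root m)) (pathX (A.branch jt) t j) := by
  funext i
  induction i using Fin.cases with
  | zero => exact congrArg (A 0) (Subsingleton.elim _ _)
  | succ i =>
    exact congrArg (A (i + 1)) (Node.take_cons jt j i (Nat.lt_succ_iff.mp i.isLt))

def branchReward (c : (t : ℕ) → Node m t → (Fin (t + 1) → X) → ℝ) (jt : Fin (m 0)) (x : X) :
    (t : ℕ) → Node (fun i => m (i + 1)) t → (Fin (t + 1) → X) → ℝ :=
  fun t j y => c (t + 1) (Node.cons jt j) (Fin.cons x y)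

def branchValue (W : (t : ℕ) → Node m t → (Fin t → X) → ℝ) (jt : Fin (m 0)) (x : X) :
    (t : ℕ) → Node (fun i => m (i + 1)) t → (Fin t → X) → ℝ :=
  fun t j y => W (t + 1) (Node.cons jt j) (Fin.cons x y)

theorem branchValue_root (W : (t : ℕ) → Node m t → (Fin t → X) → ℝ) (jt : Fin (m 0)) (x : X) :
    branchValue W jt x 0 (Node.root _) (fun i => i.elim0) =
      W 1 ((Node.root m).snoc jt) (Fin.snoc (fun i => i.elim0) x) := by
  have hx : (Fin.cons x fun i => i.elim0 : Fin 1 → X) = Fin.snoc (fun i => i.elim0) x := by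
    funext i; fin_cases i; rfl
  rw [branchValue, Node.cons_root, hx]

theorem oneShotF_succ (k : ℕ) (c : (t : ℕ) → Node m t → (Fin (t + 1) → X) → ℝ)
    (A : Assignment m X) :
    oneShotF (k + 1) m c A =
      c 0 (Node.root m) (Fin.snoc (fun i => i.elim0) (A 0 (Node.root m))) +
        1 / (m 0 : ℝ) *
          ∑ jt, oneShotF k (fun i => m (i + 1)) (branchReward c jt (A 0 (Node.root m)))
            (A.branch jt) := by
  have hroot : pathX A 0 (Node.root m) = Fin.snoc (fun i => i.elim0) (A 0 (Node.root m)) := by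
    funext i; fin_cases i; rfl
  simp only [oneShotF, Finset.sum_range_succ', Finset.prod_range_succ', Node.sum_succ, pathX_cons,
    Fintype.sum_subsingleton _ (Node.root m), hroot, branchReward, Finset.mul_sum]
  rw [Finset.sum_comm]
  simp only [Finset.prod_range_zero, one_mul, add_comm]
  refine congrArg _ (Finset.sum_congr rfl fun jt _ => Finset.sum_congr rfl fun t _ =>
    Finset.sum_congr rfl fun j _ => ?_)
  ring

theorem range_oneShotF_succ (k : ℕ) (c : (t : ℕ) → Node m t → (Fin (t + 1) → X) → ℝ) :
    Set.range (oneShotF (k + 1) m c) =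
      Set.range fun p : X × (Fin (m 0) → Assignment (fun i => m (i + 1)) X) =>
        c 0 (Node.root m) (Fin.snoc (fun i => i.elim0) p.1) +
          1 / (m 0 : ℝ) *
            ∑ jt, oneShotF k (fun i => m (i + 1)) (branchReward c jt p.1) (p.2 jt) := by
  rw [← Assignment.graft_surjective.range_comp]
  exact congrArg Set.range (funext fun p => oneShotF_succ k c _)

theorem range_oneShotF_one (c : (t : ℕ) → Node m t → (Fin (t + 1) → X) → ℝ) :
    Set.range (oneShotF 1 m c) =
      Set.range fun x => c 0 (Node.root m) (Fin.snoc (fun i => i.elim0) x) := by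
  have hsurj : Function.Surjective fun A : Assignment m X => A 0 (Node.root m) :=
    fun x => ⟨fun _ _ => x, rfl⟩
  rw [← hsurj.range_comp]
  refine congrArg Set.range (funext fun A => ?_)
  change oneShotF (0 + 1) m c A = _
  rw [oneShotF_succ]
  simp [oneShotF]

/-- Levels are counted from `0`, so `n` is the last level: the horizon is `n + 1`. -/
structure IsBellmanSolution (n : ℕ) (m : ℕ → ℕ) (c : (t : ℕ) → Node m t → (Fin (t + 1) → X) → ℝ)
    (W : (t : ℕ) → Node m t → (Fin t → X) → ℝ) : Prop where
  last : ∀ (j : Node m n) (x : Fin n → X),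
    IsGreatest (Set.range fun xn : X => c n j (Fin.snoc x xn)) (W n j x)
  step : ∀ t < n, ∀ (j : Node m t) (x : Fin t → X),
    IsGreatest (Set.range fun xt : X =>
        c t j (Fin.snoc x xt) +
          1 / (m t : ℝ) * ∑ jt : Fin (m t), W (t + 1) (j.snoc jt) (Fin.snoc x xt))
      (W t j x)

namespace IsBellmanSolution

variable {n : ℕ} {c : (t : ℕ) → Node m t → (Fin (t + 1) → X) → ℝ}
  {W : (t : ℕ) → Node m t → (Fin t → X) → ℝ}

theorem branch (h : IsBellmanSolution (n + 1) m c W) (jt : Fin (m 0)) (x : X) :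
    IsBellmanSolution n (fun i => m (i + 1)) (branchReward c jt x) (branchValue W jt x) where
  last j y := by
    simpa only [branchReward, branchValue, Fin.cons_snoc_eq_snoc_cons] using
      h.last (Node.cons jt j) (Fin.cons x y)
  step t ht j y := by
    simpa only [branchReward, branchValue, Fin.cons_snoc_eq_snoc_cons, Node.cons_snoc] using
      h.step (t + 1) (by omega) (Node.cons jt j) (Fin.cons x y)

theorem isGreatest_oneShotF (h : IsBellmanSolution n m c W) :
    IsGreatest (Set.range (oneShotF (n + 1) m c)) (W 0 (Node.root m) fun i => i.elim0) := by
  induction n generalizing m c W with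
  | zero =>
    rw [range_oneShotF_one]
    exact h.last _ _
  | succ n ih =>
    rw [range_oneShotF_succ]
    refine isGreatest_range_add_sum
      (f := fun x => c 0 (Node.root m) (Fin.snoc (fun i => i.elim0) x)) (w := 1 / (m 0 : ℝ))
      (by positivity) (fun x jt => ih (h.branch jt x)) ?_
    simpa only [branchValue_root] using h.step 0 n.succ_pos (Node.root m) fun i => i.elim0

end IsBellmanSolution

end

theorem oneShot_isGreatest_general {X : Type*} (k : ℕ) (hk : 1 ≤ k)
    (m : ℕ → ℕ)
    (c : (t : ℕ) → Node m t → (Fin (t + 1) → X) → ℝ)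
    (W : (t : ℕ) → Node m t → (Fin t → X) → ℝ)
    (hWlast : ∀ (j : Node m (k - 1)) (x : Fin (k - 1) → X),
      IsGreatest (Set.range fun xk : X => c (k - 1) j (Fin.snoc x xk)) (W (k - 1) j x))
    (hWstep : ∀ t, t + 1 < k → ∀ (j : Node m t) (x : Fin t → X),
      IsGreatest (Set.range fun xt : X =>
          c t j (Fin.snoc x xt) +
            (1 / (m t : ℝ)) * ∑ jt : Fin (m t), W (t + 1) (j.snoc jt) (Fin.snoc x xt))
        (W t j x)) :
    IsGreatest (Set.range (oneShotF k m c)) (W 0 (Node.root m) (fun i => i.elim0)) := by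
  obtain ⟨n, rfl⟩ : ∃ n, k = n + 1 := ⟨k - 1, by omega⟩
  exact IsBellmanSolution.isGreatest_oneShotF ⟨hWlast, fun t ht => hWstep t (by omega)⟩

/-- The supremum of the one-shot objective over all one-shot assignments equals the root
value `W 0 root` of the scenario-tree backward recursion, and it is attained. -/
theorem oneShot_isGreatest {X : Type*} [Nonempty X] (k : ℕ) (hk : 1 ≤ k)
    (m : ℕ → ℕ) (hm : ∀ i, 1 ≤ m i)
    (c : (t : ℕ) → Node m t → (Fin (t + 1) → X) → ℝ)
    (W : (t : ℕ) → Node m t → (Fin t → X) → ℝ)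
    (hWlast : ∀ (j : Node m (k - 1)) (x : Fin (k - 1) → X),
      IsGreatest (Set.range fun xk : X => c (k - 1) j (Fin.snoc x xk)) (W (k - 1) j x))
    (hWstep : ∀ t, t + 1 < k → ∀ (j : Node m t) (x : Fin t → X),
      IsGreatest (Set.range fun xt : X =>
          c t j (Fin.snoc x xt) +
            (1 / (m t : ℝ)) * ∑ jt : Fin (m t), W (t + 1) (j.snoc jt) (Fin.snoc x xt))
        (W t j x)) :
    IsGreatest (Set.range (oneShotF k m c)) (W 0 (Node.root m) (fun i => i.elim0)) :=
  oneShot_isGreatest_general k hk m c W hWlast hWstep
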